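/- arXiv:2407.16602 — 3 statements merged into one kernel-verified Lean document; each statement's English description precedes it below -/
import Mathlib

section
/- Performance Difference Lemma: For any two policies π and π' in a finite discounted MDP with discount γ ∈ [0,1), and any initial state distribution ρ, V_ρ^{π'} − V_ρ^{π} = (1/(1−γ)) · E_{s ∼ d_ρ^{π'}} [⟨Q_s^{π}, π'_s − π_s⟩], where d_ρ^{π'} is the discounted state visitation distribution of π' starting from ρ. -/
/-! Writing `W = V' - V` and `P_{π'}` for the state-to-state kernel of `π'`, the Bellman equations
give the advantage identity `⟨Q_s, π'_s - π_s⟩ = W s - γ (P_{π'} W) s`. The visitation equation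
`d - γ d P_{π'} = (1 - γ) ρ` then turns `∑ s, d s (W s - γ (P_{π'} W) s)` into `(1 - γ) ⟨ρ, W⟩`. -/

open Finset

/-- The probability simplex over a finite action set. -/
def simplex (A : Type*) [Fintype A] : Set (A → ℝ) :=
  {p | (∀ a, 0 ≤ p a) ∧ ∑ a, p a = 1}

open Matrix

section

variable {S A : Type*} [Fintype S] [Fintype A]

def policyKernel (P : S → A → S → ℝ) (π : S → A → ℝ) : Matrix S S ℝ :=
  Matrix.of fun s s' => ∑ a, π s a * P s a s'

theorem sum_mul_sub_of_bellman {γ : ℝ} {r : S → A → ℝ} {P : S → A → S → ℝ}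
    {Q Q' : S → A → ℝ} {V V' : S → ℝ}
    (hQ : ∀ s a, Q s a = r s a + γ * ∑ s', P s a s' * V s')
    (hQ' : ∀ s a, Q' s a = r s a + γ * ∑ s', P s a s' * V' s')
    (w : S → A → ℝ) (s : S) :
    ∑ a, w s a * (Q s a - Q' s a) = γ * (policyKernel P w *ᵥ (V - V')) s := by
  simp only [hQ, hQ', mulVec, dotProduct, policyKernel, of_apply, Pi.sub_apply,
    add_sub_add_left_eq_sub, ← mul_sub, ← sum_sub_distrib, mul_sum, sum_mul]
  rw [sum_comm]
  exact sum_congr rfl fun _ _ => sum_congr rfl fun _ _ => by ring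

theorem advantage_eq_of_bellman {γ : ℝ} {r : S → A → ℝ} {P : S → A → S → ℝ}
    {π π' Q Q' : S → A → ℝ} {V V' : S → ℝ}
    (hV : ∀ s, V s = ∑ a, π s a * Q s a)
    (hQ : ∀ s a, Q s a = r s a + γ * ∑ s', P s a s' * V s')
    (hV' : ∀ s, V' s = ∑ a, π' s a * Q' s a)
    (hQ' : ∀ s a, Q' s a = r s a + γ * ∑ s', P s a s' * V' s') (s : S) :
    ∑ a, Q s a * (π' s a - π s a)
      = (V' - V - γ • (policyKernel P π' *ᵥ (V' - V))) s := by
  have hsplit : ∑ a, Q s a * (π' s a - π s a)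
      = ∑ a, π' s a * (Q s a - Q' s a) + (V' s - V s) := by
    simp only [hV s, hV' s, mul_comm (Q s _), mul_sub, sub_mul, sum_sub_distrib]
    ring
  rw [hsplit, sum_mul_sub_of_bellman hQ hQ', ← neg_sub V', mulVec_neg]
  simp only [Pi.sub_apply, Pi.smul_apply, Pi.neg_apply, smul_eq_mul]
  ring

theorem dotProduct_sub_smul_mulVec_of_eq_add_vecMul {γ : ℝ} {ρ d : S → ℝ} {M : Matrix S S ℝ}
    (hd : d = (1 - γ) • ρ + γ • (d ᵥ* M)) (f : S → ℝ) :
    d ⬝ᵥ (f - γ • (M *ᵥ f)) = (1 - γ) * (ρ ⬝ᵥ f) := by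
  have hd' : d - γ • (d ᵥ* M) = (1 - γ) • ρ := sub_eq_iff_eq_add.mpr hd
  rw [dotProduct_sub, dotProduct_smul, dotProduct_mulVec, ← smul_dotProduct, ← sub_dotProduct,
    hd', smul_dotProduct, smul_eq_mul]

end

theorem performance_difference_lemma_general
    {S A : Type*} [Fintype S] [Fintype A]
    (γ : ℝ) (hγ1 : γ < 1)
    (r : S → A → ℝ) (P : S → A → S → ℝ)
    (ρ : S → ℝ)
    (π π' : S → A → ℝ)
    (Q : S → A → ℝ) (V : S → ℝ)
    (hV : ∀ s, V s = ∑ a, π s a * Q s a)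
    (hQ : ∀ s a, Q s a = r s a + γ * ∑ s', P s a s' * V s')
    (Q' : S → A → ℝ) (V' : S → ℝ)
    (hV' : ∀ s, V' s = ∑ a, π' s a * Q' s a)
    (hQ' : ∀ s a, Q' s a = r s a + γ * ∑ s', P s a s' * V' s')
    (d : S → ℝ)
    (hd : ∀ s', d s' = (1 - γ) * ρ s' + γ * ∑ s, ∑ a, d s * π' s a * P s a s') :
    (∑ s, ρ s * V' s) - (∑ s, ρ s * V s)
      = (1 / (1 - γ)) * ∑ s, d s * (∑ a, Q s a * (π' s a - π s a)) := by
  have hd_vec : d = (1 - γ) • ρ + γ • (d ᵥ* policyKernel P π') := by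
    funext s'
    simp only [hd s', vecMul, dotProduct, policyKernel, of_apply, Pi.add_apply, Pi.smul_apply,
      smul_eq_mul, mul_sum, mul_assoc]
  have hsum : ∑ s, d s * (∑ a, Q s a * (π' s a - π s a)) = (1 - γ) * (ρ ⬝ᵥ (V' - V)) := by
    simp_rw [advantage_eq_of_bellman hV hQ hV' hQ']
    exact dotProduct_sub_smul_mulVec_of_eq_add_vecMul hd_vec _
  have hγ : 1 - γ ≠ 0 := by linarith
  rw [hsum, one_div, inv_mul_cancel_left₀ hγ, dotProduct_sub]
  rfl

/-- **Performance Difference Lemma.** For any two policies `π` and `π'` in a finite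
discounted MDP with `γ ∈ [0,1)` and initial distribution `ρ`,
`V_ρ^{π'} − V_ρ^{π} = (1/(1−γ)) · E_{s ∼ d_ρ^{π'}} [⟨Q_s^{π}, π'_s − π_s⟩]`,
where `d_ρ^{π'}` is the discounted state-visitation distribution of `π'`. -/
theorem performance_difference_lemma
    {S A : Type*} [Fintype S] [Fintype A]
    (γ : ℝ) (hγ0 : 0 ≤ γ) (hγ1 : γ < 1)
    (r : S → A → ℝ) (P : S → A → S → ℝ)
    (hP0 : ∀ s a s', 0 ≤ P s a s') (hP1 : ∀ s a, ∑ s', P s a s' = 1)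
    (ρ : S → ℝ) (hρ0 : ∀ s, 0 ≤ ρ s) (hρ1 : ∑ s, ρ s = 1)
    (π π' : S → A → ℝ) (hπ : ∀ s, π s ∈ simplex A) (hπ' : ∀ s, π' s ∈ simplex A)
    (Q : S → A → ℝ) (V : S → ℝ)
    (hV : ∀ s, V s = ∑ a, π s a * Q s a)
    (hQ : ∀ s a, Q s a = r s a + γ * ∑ s', P s a s' * V s')
    (Q' : S → A → ℝ) (V' : S → ℝ)
    (hV' : ∀ s, V' s = ∑ a, π' s a * Q' s a)
    (hQ' : ∀ s a, Q' s a = r s a + γ * ∑ s', P s a s' * V' s')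
    (d : S → ℝ)
    (hd : ∀ s', d s' = (1 - γ) * ρ s' + γ * ∑ s, ∑ a, d s * π' s a * P s a s') :
    (∑ s, ρ s * V' s) - (∑ s, ρ s * V s)
      = (1 / (1 - γ)) * ∑ s, d s * (∑ a, Q s a * (π' s a - π s a)) :=
  performance_difference_lemma_general γ hγ1 r P ρ π π' Q V hV hQ Q' V' hV' hQ' d hd
end

section
/- Descent property of exact PMD (value level): If for every state s, π_s^{t+1} minimizes −η^t⟨Q_s^{π^t}, π_s⟩ + D_h(π_s, π_s^t) over the simplex with η^t > 0, then Q_s^{π^{t+1}} ≥ Q_s^{π^t} componentwise for all s, and V_ρ^{π^{t+1}} ≥ V_ρ^{π^t} for every initial distribution ρ. -/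
open Finset

/-- The continuous linear functional `p ↦ ∑ a, v a * p a`. -/
noncomputable def dotCLM {A : Type*} [Fintype A] (v : A → ℝ) : (A → ℝ) →L[ℝ] ℝ :=
  ∑ a, v a • (ContinuousLinearMap.proj a : (A → ℝ) →L[ℝ] ℝ)

/-- Bregman divergence generated by `h` with gradient map `g`. -/
noncomputable def breg {A : Type*} [Fintype A]
    (h : (A → ℝ) → ℝ) (g : (A → ℝ) → (A → ℝ)) (p q : A → ℝ) : ℝ :=
  h p - h q - ∑ a, g q a * (p a - q a)

/-!
Testing the minimality of `π^{t+1}_s` against `π^t_s` and using `D_h(π^{t+1}_s, π^t_s) ≥ 0`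
(the first-order characterisation of convexity of `h`) gives
`⟨Q_s^{π^t}, π^t_s⟩ ≤ ⟨Q_s^{π^t}, π^{t+1}_s⟩`, i.e. `V^{π^t} ≤ T^{π^{t+1}} V^{π^t}` for the
Bellman operator of `π^{t+1}`. Since `V^{π^{t+1}}` is the fixed point of this monotone
`γ`-contraction, a maximum principle gives `V^{π^t} ≤ V^{π^{t+1}}`; the inequalities for `Q` and
for `V_ρ` follow by monotonicity.
-/

lemma ConvexOn.apply_sub_le_of_hasFDerivAt {E : Type*} [NormedAddCommGroup E] [NormedSpace ℝ E]
    {s : Set E} {f : E → ℝ} {f' : E →L[ℝ] ℝ} {x y : E}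
    (hf : ConvexOn ℝ s f) (hx : x ∈ s) (hy : y ∈ s) (hd : HasFDerivAt f f' x) :
    f' (y - x) ≤ f y - f x := by
  set L : ℝ →ᵃ[ℝ] E := AffineMap.lineMap x y
  have hL0 : L 0 = x := AffineMap.lineMap_apply_zero x y
  have hL1 : L 1 = y := AffineMap.lineMap_apply_one x y
  have hcomp : HasDerivAt (f ∘ L) (f' (y - x)) 0 :=
    (hL0 ▸ hd).comp_hasDerivAt 0 AffineMap.hasDerivAt_lineMap
  have hslope := (hf.comp_affineMap L).le_slope_of_hasDerivAt
    (by simpa [hL0] using hx) (by simpa [hL1] using hy) zero_lt_one hcomp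
  simpa [slope_def_field, hL0, hL1] using hslope

lemma dotCLM_apply {A : Type*} [Fintype A] (v x : A → ℝ) : dotCLM v x = ∑ a, v a * x a := by
  simp [dotCLM]

lemma breg_self {A : Type*} [Fintype A] (h : (A → ℝ) → ℝ) (g : (A → ℝ) → (A → ℝ)) (p : A → ℝ) :
    breg h g p p = 0 := by
  simp [breg]

lemma breg_nonneg {A : Type*} [Fintype A] {s : Set (A → ℝ)} {h : (A → ℝ) → ℝ}
    {g : (A → ℝ) → (A → ℝ)} (hconv : ConvexOn ℝ s h) {p q : A → ℝ} (hp : p ∈ s) (hq : q ∈ s)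
    (hder : HasFDerivAt h (dotCLM (g q)) q) :
    0 ≤ breg h g p q := by
  have := hconv.apply_sub_le_of_hasFDerivAt hq hp hder
  simp only [dotCLM_apply, Pi.sub_apply] at this
  simp only [breg]
  linarith

section PolicyEvaluation

variable {S A : Type*} [Fintype S] [Fintype A] {γ : ℝ}

lemma nonpos_of_le_discount_mul_kernel (hγ0 : 0 ≤ γ) (hγ1 : γ < 1) {K : S → S → ℝ}
    (hK0 : ∀ s s', 0 ≤ K s s') (hK1 : ∀ s, ∑ s', K s s' ≤ 1) {D : S → ℝ}
    (hD : ∀ s, D s ≤ γ * ∑ s', K s s' * D s') (s : S) : D s ≤ 0 := by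
  obtain ⟨s₀, -, hmax⟩ := exists_max_image univ D ⟨s, mem_univ s⟩
  suffices D s₀ ≤ 0 from (hmax s (mem_univ s)).trans this
  by_contra! hpos
  have : D s₀ ≤ γ * D s₀ :=
    calc D s₀ ≤ γ * ∑ s', K s₀ s' * D s' := hD s₀
      _ ≤ γ * ∑ s', K s₀ s' * D s₀ := by
        gcongr with s' _
        exacts [hK0 s₀ s', hmax s' (mem_univ s')]
      _ = γ * (∑ s', K s₀ s') * D s₀ := by rw [← sum_mul, mul_assoc]
      _ ≤ γ * 1 * D s₀ := by gcongr; exact hK1 s₀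
      _ = γ * D s₀ := by rw [mul_one]
  nlinarith

lemma le_of_le_bellman (hγ0 : 0 ≤ γ) (hγ1 : γ < 1) {r : S → A → ℝ} {P : S → A → S → ℝ}
    (hP0 : ∀ s a s', 0 ≤ P s a s') (hP1 : ∀ s a, ∑ s', P s a s' = 1)
    {π : S → A → ℝ} (hπ : ∀ s, π s ∈ simplex A) {V W : S → ℝ}
    (hV : ∀ s, V s = ∑ a, π s a * (r s a + γ * ∑ s', P s a s' * V s'))
    (hW : ∀ s, W s ≤ ∑ a, π s a * (r s a + γ * ∑ s', P s a s' * W s')) (s : S) :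
    W s ≤ V s := by
  set K : S → S → ℝ := fun s s' => ∑ a, π s a * P s a s'
  have hK0 : ∀ s s', 0 ≤ K s s' := fun s s' =>
    sum_nonneg fun a _ => mul_nonneg ((hπ s).1 a) (hP0 s a s')
  have hK1 : ∀ s, ∑ s', K s s' ≤ 1 := fun s => by
    simp only [K]
    rw [sum_comm]
    simp only [← mul_sum, hP1, mul_one, (hπ s).2, le_refl]
  have hD : ∀ s, W s - V s ≤ γ * ∑ s', K s s' * (W s' - V s') := fun s => by
    calc W s - V s ≤ ∑ a, π s a * (γ * ∑ s', P s a s' * (W s' - V s')) := by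
          rw [hV s]
          have := hW s
          simp only [mul_sub, sum_sub_distrib, mul_add, sum_add_distrib] at this ⊢
          linarith
      _ = γ * ∑ s', K s s' * (W s' - V s') := by
        simp only [K, mul_sum, sum_mul]
        rw [sum_comm]
        refine sum_congr rfl fun s' _ => sum_congr rfl fun a _ => ?_
        ring
  exact sub_nonpos.mp (nonpos_of_le_discount_mul_kernel hγ0 hγ1 hK0 hK1 hD s)

end PolicyEvaluation

/-- **Descent property of exact PMD (value level).** If for every state `s`,
`π^{t+1}_s` minimizes `−η^t⟨Q_s^{π^t}, ·⟩ + D_h(·, π_s^t)` over the simplex with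
`η^t > 0`, then `Q^{π^{t+1}} ≥ Q^{π^t}` componentwise and
`V_ρ^{π^{t+1}} ≥ V_ρ^{π^t}` for every initial distribution `ρ`. -/
theorem pmd_descent_value_level
    {S A : Type*} [Fintype S] [Fintype A]
    (γ : ℝ) (hγ0 : 0 ≤ γ) (hγ1 : γ < 1)
    (r : S → A → ℝ) (P : S → A → S → ℝ)
    (hP0 : ∀ s a s', 0 ≤ P s a s') (hP1 : ∀ s a, ∑ s', P s a s' = 1)
    (h : (A → ℝ) → ℝ) (g : (A → ℝ) → (A → ℝ))
    (hder : ∀ q ∈ simplex A, HasFDerivAt h (dotCLM (g q)) q)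
    (hconv : StrictConvexOn ℝ (simplex A) h)
    (πt πnext : S → A → ℝ)
    (hπt : ∀ s, πt s ∈ simplex A)
    (Q : S → A → ℝ) (V : S → ℝ)
    (hV : ∀ s, V s = ∑ a, πt s a * Q s a)
    (hQ : ∀ s a, Q s a = r s a + γ * ∑ s', P s a s' * V s')
    (Qnext : S → A → ℝ) (Vnext : S → ℝ)
    (hVnext : ∀ s, Vnext s = ∑ a, πnext s a * Qnext s a)
    (hQnext : ∀ s a, Qnext s a = r s a + γ * ∑ s', P s a s' * Vnext s')
    (η : ℝ) (hη : 0 < η)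
    (hmin : ∀ s, πnext s ∈ simplex A ∧
      ∀ p ∈ simplex A,
        -η * (∑ a, Q s a * πnext s a) + breg h g (πnext s) (πt s) ≤
        -η * (∑ a, Q s a * p a) + breg h g p (πt s)) :
    (∀ s a, Q s a ≤ Qnext s a) ∧
    (∀ ρ : S → ℝ, (∀ s, 0 ≤ ρ s) → ∑ s, ρ s = 1 →
      ∑ s, ρ s * V s ≤ ∑ s, ρ s * Vnext s) := by
  have hstep : ∀ s, ∑ a, Q s a * πt s a ≤ ∑ a, Q s a * πnext s a := fun s => by
    obtain ⟨hnext, hopt⟩ := hmin s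
    have hcompare := hopt (πt s) (hπt s)
    rw [breg_self] at hcompare
    have := breg_nonneg hconv.convexOn hnext (hπt s) (hder _ (hπt s))
    nlinarith
  have hVle : ∀ s, V s ≤ Vnext s := by
    refine le_of_le_bellman (r := r) hγ0 hγ1 hP0 hP1 (fun s => (hmin s).1)
      (fun s => ?_) (fun s => ?_)
    · rw [hVnext]
      simp only [hQnext]
    · simp only [← hQ]
      simpa only [hV s, mul_comm (πt s _), mul_comm (πnext s _)] using hstep s
  refine ⟨fun s a => ?_, fun ρ hρ _ => ?_⟩
  · rw [hQ, hQnext]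
    gcongr with s' _
    exacts [hP0 s a s', hVle s']
  · gcongr with s _
    exacts [hρ s, hVle s]
end

section
/- Upper bound on value-curvature divergence: Fix a state s and policies π, π̃. Define D_{−V}(π_s, π̃_s) := −V_s^π + V_s^{π̃} + ⟨Q_s^{π̃}, π_s − π̃_s⟩ where the full policies agree with π and π̃ respectively. Then D_{−V}(π_s, π̃_s) = −⟨Q_s^π − Q_s^{π̃}, π_s⟩ ≥ −γ‖V^π − V^{π̃}‖_∞. -/
open Finset

/-- **Upper bound on the value-curvature divergence.** Fix a state `s` and policies
`π, π̃`. With `D_{−V}(π_s, π̃_s) := −V_s^π + V_s^{π̃} + ⟨Q_s^{π̃}, π_s − π̃_s⟩`, one has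
`D_{−V}(π_s, π̃_s) = −⟨Q_s^π − Q_s^{π̃}, π_s⟩ ≥ −γ‖V^π − V^{π̃}‖_∞`. -/
theorem value_curvature_divergence_bound
    {S A : Type*} [Fintype S] [Fintype A]
    (γ : ℝ) (hγ0 : 0 ≤ γ) (hγ1 : γ < 1)
    (r : S → A → ℝ) (P : S → A → S → ℝ)
    (hP0 : ∀ s a s', 0 ≤ P s a s') (hP1 : ∀ s a, ∑ s', P s a s' = 1)
    (π πtil : S → A → ℝ) (hπ : ∀ s, π s ∈ simplex A) (hπtil : ∀ s, πtil s ∈ simplex A)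
    (Q : S → A → ℝ) (V : S → ℝ)
    (hV : ∀ s, V s = ∑ a, π s a * Q s a)
    (hQ : ∀ s a, Q s a = r s a + γ * ∑ s', P s a s' * V s')
    (Qtil : S → A → ℝ) (Vtil : S → ℝ)
    (hVtil : ∀ s, Vtil s = ∑ a, πtil s a * Qtil s a)
    (hQtil : ∀ s a, Qtil s a = r s a + γ * ∑ s', P s a s' * Vtil s')
    (s : S)
    (DnegV : ℝ)
    (hDnegV : DnegV = -V s + Vtil s + ∑ a, Qtil s a * (π s a - πtil s a)) :
    DnegV = -(∑ a, (Q s a - Qtil s a) * π s a) ∧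
    -(γ * ‖V - Vtil‖) ≤ DnegV := by
  have key : DnegV = -(∑ a, (Q s a - Qtil s a) * π s a) := by
    rw [hDnegV, hV, hVtil, ← Finset.sum_neg_distrib, ← Finset.sum_neg_distrib,
      ← Finset.sum_add_distrib, ← Finset.sum_add_distrib]
    exact Finset.sum_congr rfl fun a _ => by ring
  refine ⟨key, ?_⟩
  rw [key, neg_le_neg_iff]
  have hd : ∀ s', V s' - Vtil s' ≤ ‖V - Vtil‖ := fun s' =>
    le_trans (le_abs_self _) (norm_le_pi_norm (V - Vtil) s')
  have hπs := hπ s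
  obtain ⟨hπ0, hπ1⟩ := hπs
  calc ∑ a, (Q s a - Qtil s a) * π s a
      = ∑ a, (γ * ∑ s', P s a s' * (V s' - Vtil s')) * π s a := by
        refine Finset.sum_congr rfl fun a _ => ?_
        have h : (∑ s', P s a s' * (V s' - Vtil s'))
            = (∑ s', P s a s' * V s') - ∑ s', P s a s' * Vtil s' := by
          rw [← Finset.sum_sub_distrib]
          exact Finset.sum_congr rfl fun _ _ => by ring
        rw [hQ, hQtil, h]; ring
    _ ≤ ∑ a, (γ * ‖V - Vtil‖) * π s a := by
        refine Finset.sum_le_sum fun a _ => ?_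
        refine mul_le_mul_of_nonneg_right ?_ (hπ0 a)
        refine mul_le_mul_of_nonneg_left ?_ hγ0
        calc ∑ s', P s a s' * (V s' - Vtil s')
            ≤ ∑ s', P s a s' * ‖V - Vtil‖ :=
              Finset.sum_le_sum fun s' _ =>
                mul_le_mul_of_nonneg_left (hd s') (hP0 s a s')
          _ = ‖V - Vtil‖ := by rw [← Finset.sum_mul, hP1, one_mul]
    _ = γ * ‖V - Vtil‖ := by rw [← Finset.mul_sum, hπ1, mul_one]
end
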